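/- arXiv:1805.02083 — 2 statements merged into one kernel-verified Lean document; each statement's English description precedes it below -/
import Mathlib

section
/- For k ≥ 4, 2Reg(G) is a k-hypercycle if and only if G, after removing vertices of degree 0, is the k-cycle graph C_k. -/
def twoRegVerts {V : Type*} [DecidableEq V] (E : Finset (Finset V)) :
    Finset (Finset (Finset V)) :=
  E.powerset.filter (fun w => w.card = 2 ∧ ∃ e ∈ w, ∃ e' ∈ w, e ≠ e' ∧ (e ∩ e').Nonempty)

def hyperedge {V : Type*} [DecidableEq V] (E : Finset (Finset V)) (e : Finset V) :
    Finset (Finset (Finset V)) :=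
  (twoRegVerts E).filter (fun w => e ∈ w)

/-- 2Reg(G) (for the edge set `E`) is a `k`-hypercycle. -/
def IsKHypercycle {V : Type*} [DecidableEq V] (k : ℕ) [NeZero k]
    (E : Finset (Finset V)) : Prop :=
  ∃ (e : ZMod k → Finset V) (w : ZMod k → Finset (Finset V)),
    Function.Injective e ∧ E = Finset.univ.image e ∧
    Function.Injective w ∧ twoRegVerts E = Finset.univ.image w ∧
    ∀ i, hyperedge E (e i) = {w i, w (i + 1)}

/-- `E` is the edge set of the cycle graph `C_k`. -/
def IsCycleGraph {V : Type*} [DecidableEq V] (k : ℕ) [NeZero k]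
    (E : Finset (Finset V)) : Prop :=
  ∃ v : ZMod k → V, Function.Injective v ∧
    E = Finset.univ.image (fun i => ({v i, v (i + 1)} : Finset V))

lemma zmod_ne' (k : ℕ) [NeZero k] (hk : 4 ≤ k) {n : ℕ} (hn1 : 1 ≤ n) (hn3 : n ≤ 3) :
    ((n : ℕ) : ZMod k) ≠ 0 := by
  intro h
  have hd := (ZMod.natCast_eq_zero_iff n k).mp h
  have := Nat.le_of_dvd (by omega) hd
  omega

/-- For `k ≥ 4`: 2Reg(G) is a `k`-hypercycle iff `G` (given by its edge set,
i.e. after removing vertices of degree 0) is the cycle graph `C_k`. -/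
theorem stmt7 {V : Type*} [DecidableEq V] (k : ℕ) [NeZero k] (hk : 4 ≤ k)
    (E : Finset (Finset V)) (hE : ∀ e ∈ E, e.card = 2) :
    IsKHypercycle k E ↔ IsCycleGraph k E := by
  have h1 : (1 : ZMod k) ≠ 0 := by
    exact_mod_cast zmod_ne' k hk (n := 1) (by norm_num) (by norm_num)
  have h2 : (2 : ZMod k) ≠ 0 := by
    exact_mod_cast zmod_ne' k hk (n := 2) (by norm_num) (by norm_num)
  have h3 : (3 : ZMod k) ≠ 0 := by
    exact_mod_cast zmod_ne' k hk (n := 3) (by norm_num) (by norm_num)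
  constructor
  · rintro ⟨e, w, he, hEe, hw, hTw, hhyp⟩
    have hmemT : ∀ i, w i ∈ twoRegVerts E := by
      intro i; rw [hTw]; exact Finset.mem_image_of_mem w (Finset.mem_univ i)
    have hwT : ∀ i, w i ⊆ E ∧ (w i).card = 2 ∧
        ∃ a ∈ w i, ∃ b ∈ w i, a ≠ b ∧ (a ∩ b).Nonempty := by
      intro i
      have := hmemT i
      simp only [twoRegVerts, Finset.mem_filter, Finset.mem_powerset] at this
      tauto
    have hein : ∀ i, e i ∈ w i ∧ e i ∈ w (i + 1) := by
      intro i
      have hws : w i ∈ hyperedge E (e i) := by rw [hhyp i]; simp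
      have hws' : w (i + 1) ∈ hyperedge E (e i) := by rw [hhyp i]; simp
      simp only [hyperedge, Finset.mem_filter] at hws hws'
      exact ⟨hws.2, hws'.2⟩
    have hwi : ∀ i, w i = {e (i - 1), e i} := by
      intro i
      have ha : e (i - 1) ∈ w i := by
        have := (hein (i - 1)).2; rwa [sub_add_cancel] at this
      have hb : e i ∈ w i := (hein i).1
      have hne : e (i - 1) ≠ e i := by
        intro h; exact h1 (by linear_combination - he h)
      refine (Finset.eq_of_subset_of_card_le ?_ ?_).symm
      · intro x hx
        simp only [Finset.mem_insert, Finset.mem_singleton] at hx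
        rcases hx with rfl | rfl
        exacts [ha, hb]
      · rw [(hwT i).2.1, Finset.card_pair hne]
    have hinter : ∀ i, (e (i - 1) ∩ e i).Nonempty := by
      intro i
      obtain ⟨a, ha, b, hb, hab, habn⟩ := (hwT i).2.2
      rw [hwi i] at ha hb
      simp only [Finset.mem_insert, Finset.mem_singleton] at ha hb
      rcases ha with rfl | rfl <;> rcases hb with rfl | rfl
      · exact absurd rfl hab
      · exact habn
      · rwa [Finset.inter_comm] at habn
      · exact absurd rfl hab
    have hD : ∀ i j : ZMod k, j ≠ i → (e i ∩ e j).Nonempty → j = i - 1 ∨ j = i + 1 := by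
      intro i j hji hij
      have hne : e i ≠ e j := fun h => hji (he h).symm
      have hpair : ({e i, e j} : Finset (Finset V)) ∈ twoRegVerts E := by
        simp only [twoRegVerts, Finset.mem_filter, Finset.mem_powerset]
        refine ⟨?_, Finset.card_pair hne, e i, by simp, e j, by simp, hne, hij⟩
        intro x hx
        simp only [Finset.mem_insert, Finset.mem_singleton] at hx
        rcases hx with rfl | rfl <;>
          · rw [hEe]; exact Finset.mem_image_of_mem _ (Finset.mem_univ _)
      rw [hTw] at hpair
      obtain ⟨m, -, hm⟩ := Finset.mem_image.mp hpair
      have hmh : w m ∈ hyperedge E (e i) := by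
        simp only [hyperedge, Finset.mem_filter]
        exact ⟨hmemT m, by rw [hm]; simp⟩
      rw [hhyp i] at hmh
      simp only [Finset.mem_insert, Finset.mem_singleton] at hmh
      have hej : e j ∈ w m := by rw [hm]; simp
      rcases hmh with h | h
      · rw [h, hwi i] at hej
        simp only [Finset.mem_insert, Finset.mem_singleton] at hej
        rcases hej with h' | h'
        · exact Or.inl (he h')
        · exact absurd (he h') hji
      · rw [h, hwi (i + 1)] at hej
        simp only [Finset.mem_insert, Finset.mem_singleton] at hej
        rcases hej with h' | h'
        · have := he h'; rw [add_sub_cancel_right] at this; exact absurd this hji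
        · exact Or.inr (he h')
    have hinter' : ∀ i, ∃ x, x ∈ e (i - 1) ∩ e i := hinter
    choose v hv using hinter'
    have hv1 : ∀ i, v i ∈ e (i - 1) := fun i => (Finset.mem_inter.mp (hv i)).1
    have hv2 : ∀ i, v i ∈ e i := fun i => (Finset.mem_inter.mp (hv i)).2
    have hvnext : ∀ i, v (i + 1) ∈ e i := by
      intro i; have := hv1 (i + 1); rwa [add_sub_cancel_right] at this
    have hvne : ∀ i, v i ≠ v (i + 1) := by
      intro i h
      have hx : (e (i - 1) ∩ e (i + 1)).Nonempty :=
        ⟨v i, Finset.mem_inter.mpr ⟨hv1 i, h ▸ hv2 (i + 1)⟩⟩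
      have hne : (i + 1 : ZMod k) ≠ i - 1 := by
        intro h'; exact h2 (by linear_combination h')
      rcases hD (i - 1) (i + 1) hne hx with h' | h'
      · exact h3 (by linear_combination h')
      · exact h1 (by linear_combination h')
    have hvinj : Function.Injective v := by
      intro i j h
      by_contra hne
      have hji : j ≠ i := fun h' => hne h'.symm
      have hx : (e i ∩ e j).Nonempty := ⟨v i, Finset.mem_inter.mpr ⟨hv2 i, h ▸ hv2 j⟩⟩
      rcases hD i j hji hx with h' | h'
      · subst h'
        have := hvne (i - 1)
        rw [sub_add_cancel] at this
        exact this h.symm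
      · subst h'
        exact hvne i h
    have hei : ∀ i, e i = {v i, v (i + 1)} := by
      intro i
      have hmem : e i ∈ E := by
        rw [hEe]; exact Finset.mem_image_of_mem _ (Finset.mem_univ _)
      refine (Finset.eq_of_subset_of_card_le ?_ ?_).symm
      · intro x hx
        simp only [Finset.mem_insert, Finset.mem_singleton] at hx
        rcases hx with rfl | rfl
        exacts [hv2 i, hvnext i]
      · rw [hE _ hmem, Finset.card_pair (hvne i)]
    refine ⟨v, hvinj, ?_⟩
    rw [hEe]
    exact Finset.image_congr (fun i _ => hei i)
  · rintro ⟨v, hv, hEv⟩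
    set e : ZMod k → Finset V := fun i => ({v i, v (i + 1)} : Finset V) with he_def
    have hvne : ∀ i j : ZMod k, v i = v j → i = j := fun i j h => hv h
    have hvpne : ∀ i : ZMod k, v i ≠ v (i + 1) := by
      intro i h
      exact h1 (by linear_combination - hvne _ _ h)
    have hecard : ∀ i, (e i).card = 2 := fun i => Finset.card_pair (hvpne i)
    have hmemE : ∀ i, e i ∈ E := by
      intro i; rw [hEv]; exact Finset.mem_image_of_mem _ (Finset.mem_univ _)
    have hmemcases : ∀ i j : ZMod k, ∀ x, x ∈ e i → x ∈ e j →
        i = j ∨ i = j + 1 ∨ i + 1 = j := by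
      intro i j x hxi hxj
      simp only [he_def, Finset.mem_insert, Finset.mem_singleton] at hxi hxj
      rcases hxi with rfl | rfl <;> rcases hxj with h | h
      · exact Or.inl (hvne _ _ h)
      · exact Or.inr (Or.inl (hvne _ _ h))
      · exact Or.inr (Or.inr (hvne _ _ h.symm).symm)
      · exact Or.inl (by linear_combination hvne _ _ h)
    have heinj : Function.Injective e := by
      intro i j h
      have hxi : v i ∈ e j := by rw [← h]; simp [he_def]
      have hxi1 : v (i + 1) ∈ e j := by rw [← h]; simp [he_def]
      simp only [he_def, Finset.mem_insert, Finset.mem_singleton] at hxi hxi1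
      rcases hxi with h' | h' <;> rcases hxi1 with h'' | h''
      · exact hvne _ _ h'
      · exact hvne _ _ h'
      · have e1 := hvne _ _ h'
        have e2 := hvne _ _ h''
        exact absurd (show (2 : ZMod k) = 0 by linear_combination e2 - e1) h2
      · have e2 := hvne _ _ h''
        exact by linear_combination e2
    have hvmid : ∀ i : ZMod k, v i ∈ e (i - 1) ∩ e i := by
      intro i
      refine Finset.mem_inter.mpr ⟨?_, by simp [he_def]⟩
      simp [he_def, sub_add_cancel]
    set w : ZMod k → Finset (Finset V) := fun i => ({e (i - 1), e i} : Finset (Finset V))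
      with hw_def
    have hene : ∀ i : ZMod k, e (i - 1) ≠ e i := by
      intro i h
      exact h1 (by linear_combination - heinj h)
    have hwmem : ∀ i, w i ∈ twoRegVerts E := by
      intro i
      simp only [hw_def, twoRegVerts, Finset.mem_filter, Finset.mem_powerset]
      refine ⟨?_, Finset.card_pair (hene i), e (i - 1), by simp, e i, by simp, hene i,
        ⟨v i, hvmid i⟩⟩
      intro x hx
      simp only [Finset.mem_insert, Finset.mem_singleton] at hx
      rcases hx with rfl | rfl
      exacts [hmemE _, hmemE _]
    have hT : twoRegVerts E = Finset.univ.image w := by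
      ext s
      simp only [Finset.mem_image, Finset.mem_univ, true_and]
      constructor
      · intro hs
        simp only [twoRegVerts, Finset.mem_filter, Finset.mem_powerset] at hs
        obtain ⟨hsub, hcard, a, has, b, hbs, hab, habn⟩ := hs
        have hsab : s = {a, b} := by
          refine (Finset.eq_of_subset_of_card_le ?_ ?_).symm
          · intro x hx
            simp only [Finset.mem_insert, Finset.mem_singleton] at hx
            rcases hx with rfl | rfl
            exacts [has, hbs]
          · rw [hcard, Finset.card_pair hab]
        obtain ⟨i, -, hi⟩ := Finset.mem_image.mp (by rw [← hEv]; exact hsub has)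
        obtain ⟨j, -, hj⟩ := Finset.mem_image.mp (by rw [← hEv]; exact hsub hbs)
        have hia : e i = a := hi
        have hjb : e j = b := hj
        obtain ⟨x, hx⟩ := habn
        have hcase := hmemcases i j x (by rw [hia]; exact (Finset.mem_inter.mp hx).1)
          (by rw [hjb]; exact (Finset.mem_inter.mp hx).2)
        rcases hcase with h | h | h
        · exact absurd (by rw [← hia, ← hjb, h]) hab
        · refine ⟨i, ?_⟩
          rw [hw_def]
          simp only
          rw [hsab, ← hia, ← hjb, show i - 1 = j by linear_combination h]
          exact Finset.pair_comm _ _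
        · refine ⟨j, ?_⟩
          rw [hw_def]
          simp only
          rw [hsab, ← hia, ← hjb, show j - 1 = i by linear_combination - h,
            Finset.pair_comm]
      · rintro ⟨i, rfl⟩
        exact hwmem i
    have hwinj : Function.Injective w := by
      intro i j h
      have hei : e i ∈ w j := by rw [← h]; simp [hw_def]
      simp only [hw_def, Finset.mem_insert, Finset.mem_singleton] at hei
      rcases hei with h' | h'
      · have hej : e j ∈ w i := by rw [h]; simp [hw_def]
        simp only [hw_def, Finset.mem_insert, Finset.mem_singleton] at hej
        rcases hej with h'' | h''
        · have e1 := heinj h'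
          have e2 := heinj h''
          exact absurd (show (2 : ZMod k) = 0 by linear_combination e1 + e2) h2
        · exact (heinj h'').symm
      · exact heinj h'
    refine ⟨e, w, heinj, hEv, hwinj, hT, ?_⟩
    intro i
    ext s
    simp only [hyperedge, Finset.mem_filter, Finset.mem_insert, Finset.mem_singleton]
    constructor
    · rintro ⟨hsT, hes⟩
      rw [hT] at hsT
      obtain ⟨m, -, rfl⟩ := Finset.mem_image.mp hsT
      simp only [hw_def, Finset.mem_insert, Finset.mem_singleton] at hes
      rcases hes with h' | h'
      · right
        have : m = i + 1 := by linear_combination - heinj h'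
        rw [this]
      · left
        rw [heinj h']
    · rintro (rfl | rfl)
      · refine ⟨hwmem i, ?_⟩
        simp [hw_def]
      · refine ⟨hwmem (i + 1), ?_⟩
        simp [hw_def, add_sub_cancel_right]
end

section
/- Let H be a 2-regular hypergraph (every vertex in exactly two hyperedges) and let S ⊆ W be a transversal such that the induced subscenario H_S (vertex set S, hyperedges {f ∩ S : f ∈ F}) admits a unique probabilistic model q_S with q_S(w) > 0 for all w ∈ S. Then the sub-collection of hyperedges of H_S of size ≥ 2, together with the vertices they contain, forms a disjoint union of odd k-hypercycles (k ≥ 3), and q_S assigns value 1 to each vertex lying in a singleton hyperedge and 1/2 to every other vertex. Consequently every extremal probabilistic model on H takes values only in {0, 1/2, 1}. -/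
open Finset
open scoped Classical

/-- Degree of a vertex in a hypergraph given by its hyperedge set `F`. -/
def degH {α : Type*} [DecidableEq α] (F : Finset (Finset α)) (w : α) : ℕ :=
  (F.filter (fun f => w ∈ f)).card

structure Ctx (α : Type*) [DecidableEq α] where
  F : Finset (Finset α)
  S : Finset α
  q : α → ℝ
  hreg : ∀ w ∈ F.sup id, degH F w = 2
  hS : S ⊆ F.sup id
  htrans : ∀ f ∈ F, (f ∩ S).Nonempty
  hpos : ∀ w ∈ S, 0 < q w
  hmodel : ∀ f ∈ F, ∑ w ∈ f ∩ S, q w = 1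
  huniq : ∀ q' : α → ℝ, (∀ w ∈ S, 0 ≤ q' w) →
      (∀ f ∈ F, ∑ w ∈ f ∩ S, q' w = 1) → ∀ w ∈ S, q' w = q w

namespace Ctx

variable {α : Type*} [DecidableEq α] (c : Ctx α)

def Solo (w : α) : Prop := ∃ f ∈ c.F, f ∩ c.S = {w}

noncomputable def B : Finset α := c.S.filter (fun w => ¬ c.Solo w)

noncomputable def F2 : Finset (Finset α) := c.F.filter (fun f => (f ∩ c.S).card ≠ 1)

variable {c}

lemma deg2 {w : α} (hw : w ∈ c.S) : (c.F.filter (fun f => w ∈ f)).card = 2 :=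
  c.hreg w (c.hS hw)

lemma exists_edge {w : α} (hw : w ∈ c.S) : ∃ f ∈ c.F, w ∈ f := by
  have := c.hS hw; rwa [Finset.mem_sup] at this

lemma q_le_one {f : Finset α} {w : α} (hf : f ∈ c.F) (hw : w ∈ f ∩ c.S) : c.q w ≤ 1 := by
  have h := c.hmodel f hf
  have : c.q w ≤ ∑ x ∈ f ∩ c.S, c.q x :=
    Finset.single_le_sum (fun x hx => (c.hpos x (Finset.mem_of_mem_inter_right hx)).le) hw
  linarith

lemma eq_singleton_of_q_one {f : Finset α} {w : α} (hf : f ∈ c.F) (hw : w ∈ f ∩ c.S)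
    (h1 : c.q w = 1) : f ∩ c.S = {w} := by
  have hsum := c.hmodel f hf
  rw [← Finset.add_sum_erase _ _ hw, h1] at hsum
  have hz : ∑ x ∈ (f ∩ c.S).erase w, c.q x = 0 := by linarith
  have hE : (f ∩ c.S).erase w = ∅ := by
    by_contra hne
    obtain ⟨x, hx⟩ := Finset.nonempty_of_ne_empty hne
    have hx' : 0 < c.q x := c.hpos x (Finset.mem_of_mem_inter_right (Finset.mem_of_mem_erase hx))
    have hle : ∑ x ∈ (f ∩ c.S).erase w, c.q x ≥ c.q x :=
      Finset.single_le_sum (fun y hy => (c.hpos y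
        (Finset.mem_of_mem_inter_right (Finset.mem_of_mem_erase hy))).le) hx
    linarith
  ext y
  simp only [Finset.mem_singleton]
  constructor
  · intro hy
    by_contra hne
    exact absurd (Finset.mem_erase.mpr ⟨hne, hy⟩) (by simp [hE])
  · rintro rfl; exact hw

lemma solo_q_one {w : α} (hw : c.Solo w) : c.q w = 1 := by
  obtain ⟨f, hf, hfs⟩ := hw
  have := c.hmodel f hf
  rwa [hfs, Finset.sum_singleton] at this

lemma mem_S_of_solo {w : α} (hw : c.Solo w) : w ∈ c.S := by
  obtain ⟨f, _, hf⟩ := hw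
  have : w ∈ f ∩ c.S := by rw [hf]; exact Finset.mem_singleton_self w
  exact Finset.mem_of_mem_inter_right this

lemma solo_isolated {w : α} (hw : c.Solo w) {f : Finset α} (hf : f ∈ c.F) (hwf : w ∈ f) :
    f ∩ c.S = {w} := by
  have hwS : w ∈ c.S := mem_S_of_solo hw
  exact eq_singleton_of_q_one hf (Finset.mem_inter.mpr ⟨hwf, hwS⟩) (solo_q_one hw)


lemma mem_B_iff {w : α} : w ∈ c.B ↔ w ∈ c.S ∧ ¬ c.Solo w := by
  simp [Ctx.B]

lemma mem_F2_iff {f : Finset α} : f ∈ c.F2 ↔ f ∈ c.F ∧ (f ∩ c.S).card ≠ 1 := by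
  simp [Ctx.F2]

lemma mem_F2_of_memB {w : α} (hw : w ∈ c.B) {f : Finset α} (hf : f ∈ c.F) (hwf : w ∈ f) :
    f ∈ c.F2 := by
  rw [mem_B_iff] at hw
  rw [mem_F2_iff]
  refine ⟨hf, fun hcard => ?_⟩
  obtain ⟨x, hx⟩ := Finset.card_eq_one.mp hcard
  have hwx : w ∈ f ∩ c.S := Finset.mem_inter.mpr ⟨hwf, hw.1⟩
  rw [hx, Finset.mem_singleton] at hwx
  exact hw.2 ⟨f, hf, by rw [hx, hwx]⟩

lemma mem_B_of_mem_F2 {f : Finset α} (hf : f ∈ c.F2) {w : α} (hw : w ∈ f ∩ c.S) :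
    w ∈ c.B := by
  rw [mem_F2_iff] at hf
  rw [mem_B_iff]
  refine ⟨Finset.mem_of_mem_inter_right hw, fun hsolo => ?_⟩
  have := solo_isolated hsolo hf.1 (Finset.mem_of_mem_inter_left hw)
  exact hf.2 (by rw [this]; simp)

lemma degB {w : α} (hw : w ∈ c.B) : (c.F2.filter (fun f => w ∈ f)).card = 2 := by
  have hwS : w ∈ c.S := (mem_B_iff.mp hw).1
  have : c.F2.filter (fun f => w ∈ f) = c.F.filter (fun f => w ∈ f) := by
    ext f
    simp only [Finset.mem_filter, mem_F2_iff]
    constructor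
    · rintro ⟨⟨h1, _⟩, h2⟩; exact ⟨h1, h2⟩
    · rintro ⟨h1, h2⟩; exact ⟨(mem_F2_iff.mp (mem_F2_of_memB hw h1 h2)), h2⟩
  rw [this]; exact deg2 hwS

/-- The kernel lemma: uniqueness + positivity forces triviality of the kernel. -/
lemma kernel (v : α → ℝ) (hv : ∀ f ∈ c.F, ∑ w ∈ f ∩ c.S, v w = 0) :
    ∀ w ∈ c.S, v w = 0 := by
  intro w hw
  have hne : c.S.Nonempty := ⟨w, hw⟩
  set m := c.S.inf' hne c.q with hm
  have hmpos : 0 < m := by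
    obtain ⟨x, hx, hxe⟩ := Finset.exists_mem_eq_inf' hne c.q
    rw [hm, hxe]
    exact c.hpos x hx
  set M := c.S.sup' hne (fun x => |v x|) with hM
  have hMnn : 0 ≤ M := by
    have := Finset.le_sup' (fun x => |v x|) hw
    have := abs_nonneg (v w)
    linarith
  set ε := m / (M + 1) with hε
  have hεpos : 0 < ε := div_pos hmpos (by linarith)
  have key : ∀ x ∈ c.S, c.q x + ε * v x = c.q x := by
    apply c.huniq
    · intro x hx
      have h1 : m ≤ c.q x := Finset.inf'_le c.q hx
      have h2 : |v x| ≤ M := Finset.le_sup' (fun y => |v y|) hx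
      have h3 : ε * v x ≥ -(ε * M) := by
        have := neg_abs_le (v x)
        nlinarith [abs_nonneg (v x)]
      have h4 : ε * M ≤ m := by
        rw [hε]
        rw [div_mul_eq_mul_div, div_le_iff₀ (by linarith : (0:ℝ) < M + 1)]
        nlinarith
      linarith
    · intro f hf
      rw [Finset.sum_add_distrib, c.hmodel f hf, ← Finset.mul_sum, hv f hf]
      ring
  have := key w hw
  have hε' : ε ≠ 0 := ne_of_gt hεpos
  nlinarith [this]

lemma singleton_of_not_F2 {f : Finset α} (hf : f ∈ c.F) (hf2 : f ∉ c.F2) :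
    ∃ w, f ∩ c.S = {w} ∧ c.Solo w := by
  rw [mem_F2_iff] at hf2
  push_neg at hf2
  obtain ⟨x, hx⟩ := Finset.card_eq_one.mp (hf2 hf)
  exact ⟨x, hx, ⟨f, hf, hx⟩⟩

lemma edges_pair {w : α} (hw : w ∈ c.S) {f₁ f₂ : Finset α} (h1 : f₁ ∈ c.F) (h2 : f₂ ∈ c.F)
    (hne : f₁ ≠ f₂) (hw1 : w ∈ f₁) (hw2 : w ∈ f₂) :
    ∀ f ∈ c.F, w ∈ f → f = f₁ ∨ f = f₂ := by
  have hsub : ({f₁, f₂} : Finset (Finset α)) ⊆ c.F.filter (fun f => w ∈ f) := by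
    intro f hf
    rcases Finset.mem_insert.mp hf with rfl | hf
    · exact Finset.mem_filter.mpr ⟨h1, hw1⟩
    · rw [Finset.mem_singleton] at hf; subst hf; exact Finset.mem_filter.mpr ⟨h2, hw2⟩
  have hcard : (c.F.filter (fun f => w ∈ f)).card ≤ ({f₁, f₂} : Finset (Finset α)).card := by
    rw [deg2 hw, Finset.card_insert_of_notMem (by simpa using hne), Finset.card_singleton]
  have heq := Finset.eq_of_subset_of_card_le hsub hcard
  intro f hf hwf
  have : f ∈ ({f₁, f₂} : Finset (Finset α)) := by
    rw [heq]; exact Finset.mem_filter.mpr ⟨hf, hwf⟩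
  simpa using this

lemma two_le_card_F2 {f : Finset α} (hf : f ∈ c.F2) : 2 ≤ (f ∩ c.S).card := by
  rw [mem_F2_iff] at hf
  have h1 : 1 ≤ (f ∩ c.S).card := Finset.card_pos.mpr (c.htrans f hf.1)
  omega

lemma no_parallel {f₁ f₂ : Finset α} (h1 : f₁ ∈ c.F2) (h2 : f₂ ∈ c.F2) (hne : f₁ ≠ f₂) :
    f₁ ∩ c.S ≠ f₂ ∩ c.S := by
  intro heq
  obtain ⟨a, ha, b, hb, hab⟩ := Finset.one_lt_card.mp (two_le_card_F2 h1)
  have h1F : f₁ ∈ c.F := (mem_F2_iff.mp h1).1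
  have h2F : f₂ ∈ c.F := (mem_F2_iff.mp h2).1
  have haS : a ∈ c.S := Finset.mem_of_mem_inter_right ha
  have hbS : b ∈ c.S := Finset.mem_of_mem_inter_right hb
  have ha2 : a ∈ f₂ ∩ c.S := heq ▸ ha
  have hb2 : b ∈ f₂ ∩ c.S := heq ▸ hb
  -- the kernel vector
  set v : α → ℝ := fun x => (if x = a then (1:ℝ) else 0) + (if x = b then (-1:ℝ) else 0) with hv
  have hker : ∀ f ∈ c.F, ∑ w ∈ f ∩ c.S, v w = 0 := by
    intro f hf
    have hsum : ∑ w ∈ f ∩ c.S, v w =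
        (if a ∈ f ∩ c.S then (1:ℝ) else 0) + (if b ∈ f ∩ c.S then (-1:ℝ) else 0) := by
      rw [hv, Finset.sum_add_distrib, Finset.sum_ite_eq' (f ∩ c.S) a (fun _ => (1:ℝ)),
        Finset.sum_ite_eq' (f ∩ c.S) b (fun _ => (-1:ℝ))]
    rw [hsum]
    by_cases hcase : f = f₁ ∨ f = f₂
    · rcases hcase with rfl | rfl
      · rw [if_pos ha, if_pos hb]; ring
      · rw [if_pos ha2, if_pos hb2]; ring
    · push_neg at hcase
      have hpa := edges_pair haS h1F h2F hne (Finset.mem_of_mem_inter_left ha)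
        (Finset.mem_of_mem_inter_left ha2) f hf
      have hpb := edges_pair hbS h1F h2F hne (Finset.mem_of_mem_inter_left hb)
        (Finset.mem_of_mem_inter_left hb2) f hf
      have hna : a ∉ f ∩ c.S := by
        intro hmem
        rcases hpa (Finset.mem_of_mem_inter_left hmem) with rfl | rfl
        exacts [hcase.1 rfl, hcase.2 rfl]
      have hnb : b ∉ f ∩ c.S := by
        intro hmem
        rcases hpb (Finset.mem_of_mem_inter_left hmem) with rfl | rfl
        exacts [hcase.1 rfl, hcase.2 rfl]
      rw [if_neg hna, if_neg hnb]; ring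
  have := kernel v hker a haS
  rw [hv] at this
  simp only [if_pos rfl, if_neg hab] at this
  norm_num at this

/-- extension-by-zero of a function on `B`. -/
noncomputable def extB (c : Ctx α) (v : ↥c.B → ℝ) : α → ℝ :=
  fun w => if h : w ∈ c.B then v ⟨w, h⟩ else 0

lemma card_B_le_card_F2 : c.B.card ≤ c.F2.card := by
  classical
  set Φ : (↥c.B → ℝ) →ₗ[ℝ] (↥c.F2 → ℝ) :=
    { toFun := fun v => fun f => ∑ w ∈ (f : Finset α) ∩ c.S, c.extB v w
      map_add' := by
        intro v v'
        funext f
        simp only [Pi.add_apply, ← Finset.sum_add_distrib]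
        apply Finset.sum_congr rfl
        intro w _
        unfold extB
        by_cases h : w ∈ c.B <;> simp [h]
      map_smul' := by
        intro r v
        funext f
        simp only [Pi.smul_apply, smul_eq_mul, RingHom.id_apply, Finset.mul_sum]
        apply Finset.sum_congr rfl
        intro w _
        unfold extB
        by_cases h : w ∈ c.B <;> simp [h] } with hΦ
  have hinj : Function.Injective Φ := by
    rw [injective_iff_map_eq_zero]
    intro v hv0
    have hext : ∀ f ∈ c.F, ∑ w ∈ f ∩ c.S, c.extB v w = 0 := by
      intro f hf
      by_cases hf2 : f ∈ c.F2
      · exact congrFun hv0 ⟨f, hf2⟩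
      · obtain ⟨w, hw, hsolo⟩ := singleton_of_not_F2 hf hf2
        rw [hw, Finset.sum_singleton]
        unfold extB
        rw [dif_neg]
        rw [mem_B_iff]
        push_neg
        intro _; exact hsolo
    have hz := kernel (c.extB v) hext
    funext w
    have hwB := w.2
    have hwS : (w : α) ∈ c.S := (mem_B_iff.mp hwB).1
    have := hz w hwS
    unfold extB at this
    rw [dif_pos hwB] at this
    simpa using this
  calc c.B.card = Module.finrank ℝ (↥c.B → ℝ) := by
        rw [Module.finrank_fintype_fun_eq_card, Fintype.card_coe]
    _ ≤ Module.finrank ℝ (↥c.F2 → ℝ) := LinearMap.finrank_le_finrank_of_injective hinj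
    _ = c.F2.card := by rw [Module.finrank_fintype_fun_eq_card, Fintype.card_coe]

lemma inter_eq_filterB {f : Finset α} (hf : f ∈ c.F2) :
    f ∩ c.S = c.B.filter (fun w => w ∈ f) := by
  ext w
  simp only [Finset.mem_filter]
  constructor
  · intro hw
    exact ⟨mem_B_of_mem_F2 hf hw, Finset.mem_of_mem_inter_left hw⟩
  · rintro ⟨hwB, hwf⟩
    exact Finset.mem_inter.mpr ⟨hwf, (mem_B_iff.mp hwB).1⟩

lemma sum_card_eq : ∑ f ∈ c.F2, (f ∩ c.S).card = 2 * c.B.card := by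
  have : ∑ f ∈ c.F2, (f ∩ c.S).card = ∑ f ∈ c.F2, ∑ w ∈ c.B, (if w ∈ f then 1 else 0) := by
    apply Finset.sum_congr rfl
    intro f hf
    rw [inter_eq_filterB hf, Finset.card_filter]
  rw [this, Finset.sum_comm]
  have : ∀ w ∈ c.B, ∑ f ∈ c.F2, (if w ∈ f then 1 else 0) = 2 := by
    intro w hw
    rw [← Finset.card_filter]
    exact degB hw
  rw [Finset.sum_congr rfl this, Finset.sum_const, smul_eq_mul, mul_comm]

lemma card_F2_inter {f : Finset α} (hf : f ∈ c.F2) : (f ∩ c.S).card = 2 := by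
  by_contra hne
  have h3 : 3 ≤ (f ∩ c.S).card := by
    have := two_le_card_F2 hf
    omega
  have hlt : ∑ g ∈ c.F2, 2 < ∑ g ∈ c.F2, (g ∩ c.S).card := by
    apply Finset.sum_lt_sum
    · intro g hg; exact two_le_card_F2 hg
    · exact ⟨f, hf, by omega⟩
  rw [Finset.sum_const, smul_eq_mul, sum_card_eq] at hlt
  have := card_B_le_card_F2 (c := c)
  omega

lemma pair_of_F2 {f : Finset α} (hf : f ∈ c.F2) :
    ∃ a b, a ≠ b ∧ f ∩ c.S = {a, b} := by
  obtain ⟨a, b, hab, h⟩ := Finset.card_eq_two.mp (card_F2_inter hf)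
  exact ⟨a, b, hab, h⟩

/-- Part (2): values. -/
lemma values : ∀ w ∈ c.S, (c.Solo w → c.q w = 1) ∧ (¬ c.Solo w → c.q w = 1 / 2) := by
  have key : ∀ w ∈ c.S, w ∈ c.B → c.q w = 1/2 := by
    intro w hwS hwB
    set q' : α → ℝ := fun x => if x ∈ c.B then 1 - c.q x else c.q x with hq'
    have h2 := c.huniq q'
      (by
        intro x hx
        rw [hq']
        by_cases h : x ∈ c.B
        · simp only [if_pos h]
          obtain ⟨f, hf, hxf⟩ := exists_edge hx
          have := q_le_one hf (Finset.mem_inter.mpr ⟨hxf, hx⟩)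
          linarith
        · simp only [if_neg h]
          exact (c.hpos x hx).le)
      (by
        intro f hf
        by_cases hf2 : f ∈ c.F2
        · obtain ⟨a, b, hab, hpair⟩ := pair_of_F2 hf2
          have haB : a ∈ c.B := mem_B_of_mem_F2 hf2 (by rw [hpair]; simp)
          have hbB : b ∈ c.B := mem_B_of_mem_F2 hf2 (by rw [hpair]; simp)
          have hsum := c.hmodel f hf
          rw [hpair] at hsum ⊢
          rw [Finset.sum_pair hab] at hsum ⊢
          rw [hq']
          simp only [if_pos haB, if_pos hbB]
          linarith
        · obtain ⟨x, hx, hsolo⟩ := singleton_of_not_F2 hf hf2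
          have hxB : x ∉ c.B := by
            rw [mem_B_iff]; push_neg; intro _; exact hsolo
          rw [hx, Finset.sum_singleton, hq']
          simp only [if_neg hxB]
          exact solo_q_one hsolo)
      w hwS
    rw [hq'] at h2
    simp only [if_pos hwB] at h2
    linarith
  intro w hwS
  constructor
  · exact solo_q_one
  · intro hns
    exact key w hwS (mem_B_iff.mpr ⟨hwS, hns⟩)

/-! ### Neighborhoods -/

noncomputable def nbhd (c : Ctx α) (b : α) : Finset α :=
  c.B.filter (fun x => x ≠ b ∧ ∃ f ∈ c.F2, x ∈ f ∧ b ∈ f)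

lemma mem_nbhd_iff {x b : α} :
    x ∈ c.nbhd b ↔ x ∈ c.B ∧ x ≠ b ∧ ∃ f ∈ c.F2, x ∈ f ∧ b ∈ f := by
  simp [Ctx.nbhd]

lemma nbhd_symm {x b : α} (hb : b ∈ c.B) (hx : x ∈ c.nbhd b) : b ∈ c.nbhd x := by
  rw [mem_nbhd_iff] at hx ⊢
  obtain ⟨hxB, hxb, f, hf, hxf, hbf⟩ := hx
  exact ⟨hb, Ne.symm hxb, f, hf, hbf, hxf⟩

lemma nbhd_mem_B {x b : α} (hx : x ∈ c.nbhd b) : x ∈ c.B := (mem_nbhd_iff.mp hx).1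

lemma nbhd_ne {x b : α} (hx : x ∈ c.nbhd b) : x ≠ b := (mem_nbhd_iff.mp hx).2.1

/-- the other vertex of a 2-element edge -/
lemma pair_other {f : Finset α} (hf : f ∈ c.F2) {w : α} (hw : w ∈ f ∩ c.S) :
    ∃ x, x ≠ w ∧ f ∩ c.S = {w, x} := by
  obtain ⟨a, b, hab, hpair⟩ := pair_of_F2 hf
  rw [hpair, Finset.mem_insert, Finset.mem_singleton] at hw
  rcases hw with rfl | rfl
  · exact ⟨b, hab.symm, hpair⟩
  · exact ⟨a, hab, by rw [hpair, Finset.pair_comm]⟩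

lemma nbhd_card {w : α} (hw : w ∈ c.B) : (c.nbhd w).card = 2 := by
  have hwS : w ∈ c.S := (mem_B_iff.mp hw).1
  obtain ⟨f₁, f₂, hne, hpair⟩ := Finset.card_eq_two.mp (degB hw)
  have h1 : f₁ ∈ c.F2 ∧ w ∈ f₁ := by
    have : f₁ ∈ c.F2.filter (fun f => w ∈ f) := by rw [hpair]; simp
    simpa using (Finset.mem_filter.mp this)
  have h2 : f₂ ∈ c.F2 ∧ w ∈ f₂ := by
    have : f₂ ∈ c.F2.filter (fun f => w ∈ f) := by rw [hpair]; simp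
    simpa using (Finset.mem_filter.mp this)
  obtain ⟨x₁, hx1ne, hx1⟩ := pair_other h1.1 (Finset.mem_inter.mpr ⟨h1.2, hwS⟩)
  obtain ⟨x₂, hx2ne, hx2⟩ := pair_other h2.1 (Finset.mem_inter.mpr ⟨h2.2, hwS⟩)
  have hx12 : x₁ ≠ x₂ := by
    intro h
    subst h
    exact no_parallel h1.1 h2.1 hne (by rw [hx1, hx2])
  have hnb : c.nbhd w = {x₁, x₂} := by
    ext y
    rw [mem_nbhd_iff]
    constructor
    · rintro ⟨hyB, hyw, f, hf, hyf, hwf⟩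
      have hfmem : f ∈ c.F2.filter (fun g => w ∈ g) := Finset.mem_filter.mpr ⟨hf, hwf⟩
      rw [hpair] at hfmem
      have hyS : y ∈ c.S := (mem_B_iff.mp hyB).1
      rcases Finset.mem_insert.mp hfmem with rfl | hfm
      · have : y ∈ f ∩ c.S := Finset.mem_inter.mpr ⟨hyf, hyS⟩
        rw [hx1] at this
        rcases Finset.mem_insert.mp this with rfl | h
        · exact absurd rfl hyw
        · rw [Finset.mem_singleton] at h; subst h; simp
      · rw [Finset.mem_singleton] at hfm; subst hfm
        have : y ∈ f ∩ c.S := Finset.mem_inter.mpr ⟨hyf, hyS⟩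
        rw [hx2] at this
        rcases Finset.mem_insert.mp this with rfl | h
        · exact absurd rfl hyw
        · rw [Finset.mem_singleton] at h; subst h; simp
    · intro hy
      rcases Finset.mem_insert.mp hy with rfl | hy
      · refine ⟨?_, hx1ne, f₁, h1.1, ?_, h1.2⟩
        · exact mem_B_of_mem_F2 h1.1 (by rw [hx1]; simp)
        · have : y ∈ f₁ ∩ c.S := by rw [hx1]; simp
          exact Finset.mem_of_mem_inter_left this
      · rw [Finset.mem_singleton] at hy; subst hy
        refine ⟨?_, hx2ne, f₂, h2.1, ?_, h2.2⟩
        · exact mem_B_of_mem_F2 h2.1 (by rw [hx2]; simp)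
        · have : y ∈ f₂ ∩ c.S := by rw [hx2]; simp
          exact Finset.mem_of_mem_inter_left this
  rw [hnb, Finset.card_insert_of_notMem (by simpa using hx12), Finset.card_singleton]

/-- The other neighbor. -/
noncomputable def other (c : Ctx α) (a b : α) : α :=
  if h : ((c.nbhd b).erase a).Nonempty then h.choose else b

lemma other_spec {a b : α} (hb : b ∈ c.B) (ha : a ∈ c.nbhd b) :
    (c.nbhd b).erase a = {c.other a b} := by
  have hcard : ((c.nbhd b).erase a).card = 1 := by
    rw [Finset.card_erase_of_mem ha, nbhd_card hb]
  obtain ⟨y, hy⟩ := Finset.card_eq_one.mp hcard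
  have hne : ((c.nbhd b).erase a).Nonempty := by rw [hy]; simp
  have hoth : c.other a b ∈ (c.nbhd b).erase a := by
    rw [Ctx.other, dif_pos hne]; exact hne.choose_spec
  rw [hy] at hoth ⊢
  rw [Finset.mem_singleton] at hoth
  rw [hoth]

lemma other_mem {a b : α} (hb : b ∈ c.B) (ha : a ∈ c.nbhd b) : c.other a b ∈ c.nbhd b := by
  have := other_spec hb ha
  have : c.other a b ∈ (c.nbhd b).erase a := by rw [this]; simp
  exact Finset.mem_of_mem_erase this

lemma other_ne {a b : α} (hb : b ∈ c.B) (ha : a ∈ c.nbhd b) : c.other a b ≠ a := by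
  have h := other_spec hb ha
  have : c.other a b ∈ (c.nbhd b).erase a := by rw [h]; simp
  exact Finset.ne_of_mem_erase this

lemma other_unique {a b x : α} (hb : b ∈ c.B) (ha : a ∈ c.nbhd b)
    (hx : x ∈ c.nbhd b) (hxa : x ≠ a) : x = c.other a b := by
  have h := other_spec hb ha
  have : x ∈ (c.nbhd b).erase a := Finset.mem_erase.mpr ⟨hxa, hx⟩
  rw [h, Finset.mem_singleton] at this
  exact this

lemma nbhd_eq_pair {a b : α} (hb : b ∈ c.B) (ha : a ∈ c.nbhd b) :
    c.nbhd b = {a, c.other a b} := by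
  have h2 := Finset.insert_erase ha
  rw [other_spec hb ha] at h2
  exact h2.symm

/-! ### Walks -/

lemma other_other {a b : α} (hb : b ∈ c.B) (ha : a ∈ c.nbhd b) :
    c.other (c.other a b) b = a :=
  (other_unique hb (other_mem hb ha) ha (Ne.symm (other_ne hb ha))).symm

noncomputable def stepd (c : Ctx α) (d : α × α) : α × α := (d.2, c.other d.1 d.2)

def IsDart (c : Ctx α) (d : α × α) : Prop := d.2 ∈ c.B ∧ d.1 ∈ c.nbhd d.2

noncomputable def start (c : Ctx α) (w : α) : α × α :=
  if h : (c.nbhd w).Nonempty then (h.choose, w) else (w, w)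

noncomputable def W (c : Ctx α) (w : α) (n : ℕ) : α × α := c.stepd^[n] (c.start w)

noncomputable def cyc (c : Ctx α) (w : α) (n : ℕ) : α := (c.W w n).2

lemma start_dart {w : α} (hw : w ∈ c.B) : c.IsDart (c.start w) := by
  have hne : (c.nbhd w).Nonempty := by
    rw [← Finset.card_pos, nbhd_card hw]; norm_num
  rw [Ctx.start, dif_pos hne]
  exact ⟨hw, hne.choose_spec⟩

lemma stepd_dart {d : α × α} (hd : c.IsDart d) : c.IsDart (c.stepd d) := by
  obtain ⟨h2, h1⟩ := hd
  have hom := other_mem h2 h1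
  exact ⟨nbhd_mem_B hom, nbhd_symm h2 hom⟩

lemma W_zero {w : α} : c.W w 0 = c.start w := rfl

lemma W_succ {w : α} (n : ℕ) : c.W w (n + 1) = c.stepd (c.W w n) :=
  Function.iterate_succ_apply' _ _ _

lemma W_dart {w : α} (hw : w ∈ c.B) (n : ℕ) : c.IsDart (c.W w n) := by
  induction n with
  | zero => exact start_dart hw
  | succ n ih => rw [W_succ]; exact stepd_dart ih

lemma cyc_mem_B {w : α} (hw : w ∈ c.B) (n : ℕ) : c.cyc w n ∈ c.B := (W_dart hw n).1

lemma cyc_zero {w : α} : c.cyc w 0 = w := by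
  rw [Ctx.cyc, W_zero, Ctx.start]
  split <;> rfl

lemma W_fst {w : α} (n : ℕ) : (c.W w (n + 1)).1 = c.cyc w n := by
  rw [W_succ]; rfl

lemma W_eq_pair {w : α} (n : ℕ) : c.W w (n + 1) = (c.cyc w n, c.cyc w (n + 1)) := by
  have h1 := W_fst (c := c) (w := w) n
  exact Prod.ext h1 rfl

lemma cyc_succ_mem_nbhd {w : α} (hw : w ∈ c.B) (n : ℕ) :
    c.cyc w n ∈ c.nbhd (c.cyc w (n + 1)) := by
  have hd := W_dart hw (n + 1)
  rw [W_eq_pair] at hd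
  exact hd.2

lemma cyc_mem_nbhd_succ {w : α} (hw : w ∈ c.B) (n : ℕ) :
    c.cyc w (n + 1) ∈ c.nbhd (c.cyc w n) :=
  nbhd_symm (cyc_mem_B hw (n + 1)) (cyc_succ_mem_nbhd hw n)

lemma cyc_succ_ne {w : α} (hw : w ∈ c.B) (n : ℕ) : c.cyc w (n + 1) ≠ c.cyc w n :=
  nbhd_ne (cyc_mem_nbhd_succ hw n)

lemma cyc_straight {w : α} (hw : w ∈ c.B) (n : ℕ) : c.cyc w (n + 2) ≠ c.cyc w n := by
  have hd := W_dart hw (n + 1)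
  rw [W_eq_pair] at hd
  have : c.cyc w (n + 2) = c.other (c.cyc w n) (c.cyc w (n + 1)) := by
    rw [Ctx.cyc, show n + 2 = (n + 1) + 1 from rfl, W_succ, W_eq_pair]
    rfl
  rw [this]
  exact other_ne hd.1 hd.2

lemma stepd_inj {d d' : α × α} (hd : c.IsDart d) (hd' : c.IsDart d')
    (h : c.stepd d = c.stepd d') : d = d' := by
  obtain ⟨a, b⟩ := d
  obtain ⟨a', b'⟩ := d'
  rw [Ctx.stepd, Ctx.stepd, Prod.mk.injEq] at h
  obtain ⟨rfl, h2⟩ := h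
  have e1 : a = c.other (c.other a b) b := (other_other hd.1 hd.2).symm
  rw [h2, other_other hd'.1 hd'.2] at e1
  rw [e1]

lemma W_cancel {w : α} (hw : w ∈ c.B) :
    ∀ m n, m ≤ n → c.W w m = c.W w n → c.W w 0 = c.W w (n - m) := by
  intro m
  induction m with
  | zero => intro n _ h; simpa using h
  | succ m ih =>
    intro n hmn h
    obtain ⟨n', rfl⟩ : ∃ n', n = n' + 1 := ⟨n - 1, by omega⟩
    rw [W_succ, W_succ] at h
    have := stepd_inj (W_dart hw m) (W_dart hw n') h
    have := ih n' (by omega) this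
    simpa using this

lemma exists_period {w : α} (hw : w ∈ c.B) : ∃ n, 0 < n ∧ c.W w n = c.W w 0 := by
  set N := (c.B ×ˢ c.B).card with hN
  have hmaps : ∀ n ∈ Finset.range (N + 1), c.W w n ∈ c.B ×ˢ c.B := by
    intro n _
    have hd := W_dart hw n
    exact Finset.mem_product.mpr ⟨nbhd_mem_B hd.2, hd.1⟩
  obtain ⟨m, hm, n, hn, hmn, heq⟩ :=
    Finset.exists_ne_map_eq_of_card_lt_of_maps_to (by rw [Finset.card_range]; omega) hmaps
  rcases Nat.lt_or_ge m n with hlt | hge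
  · have := W_cancel hw m n (le_of_lt hlt) heq
    exact ⟨n - m, by omega, this.symm⟩
  · have hlt : n < m := by omega
    have := W_cancel hw n m (le_of_lt hlt) heq.symm
    exact ⟨m - n, by omega, this.symm⟩

noncomputable def per (c : Ctx α) (w : α) : ℕ :=
  if h : ∃ n, 0 < n ∧ c.W w n = c.W w 0 then Nat.find h else 0

lemma per_pos {w : α} (hw : w ∈ c.B) : 0 < c.per w := by
  rw [Ctx.per, dif_pos (exists_period hw)]
  exact (Nat.find_spec (exists_period hw)).1

lemma W_per {w : α} (hw : w ∈ c.B) : c.W w (c.per w) = c.W w 0 := by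
  rw [Ctx.per, dif_pos (exists_period hw)]
  exact (Nat.find_spec (exists_period hw)).2

lemma per_min {w : α} (hw : w ∈ c.B) {n : ℕ} (hn : 0 < n) (h : c.W w n = c.W w 0) :
    c.per w ≤ n := by
  rw [Ctx.per, dif_pos (exists_period hw)]
  exact Nat.find_le ⟨hn, h⟩

lemma W_add_per {w : α} (hw : w ∈ c.B) (j : ℕ) : c.W w (j + c.per w) = c.W w j := by
  induction j with
  | zero => simpa using W_per hw
  | succ j ih =>
    have : j + 1 + c.per w = (j + c.per w) + 1 := by omega
    rw [this, W_succ, W_succ, ih]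

lemma W_mod {w : α} (hw : w ∈ c.B) (m : ℕ) : c.W w m = c.W w (m % c.per w) := by
  induction m using Nat.strong_induction_on with
  | _ m ih =>
    rcases Nat.lt_or_ge m (c.per w) with h | h
    · rw [Nat.mod_eq_of_lt h]
    · have hper := per_pos hw
      have h1 : m = (m - c.per w) + c.per w := by omega
      have h2 : (m - c.per w) % c.per w = m % c.per w := by
        conv_rhs => rw [h1]
        rw [Nat.add_mod_right]
      calc c.W w m = c.W w ((m - c.per w) + c.per w) := by rw [← h1]
        _ = c.W w (m - c.per w) := W_add_per hw _
        _ = c.W w ((m - c.per w) % c.per w) := ih _ (by omega)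
        _ = c.W w (m % c.per w) := by rw [h2]

lemma cyc_add_per {w : α} (hw : w ∈ c.B) (j : ℕ) : c.cyc w (j + c.per w) = c.cyc w j := by
  rw [Ctx.cyc, W_add_per hw]; rfl

lemma cyc_mod {w : α} (hw : w ∈ c.B) (m : ℕ) : c.cyc w m = c.cyc w (m % c.per w) := by
  rw [Ctx.cyc, W_mod hw]; rfl

lemma cyc_per {w : α} (hw : w ∈ c.B) : c.cyc w (c.per w) = w := by
  rw [Ctx.cyc, W_per hw, ← Ctx.cyc, cyc_zero]

/-! ### Injectivity of the cycle -/

lemma start_snd {w : α} : (c.start w).2 = w := by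
  rw [Ctx.start]; split <;> rfl

lemma start_fst_mem {w : α} (hw : w ∈ c.B) : (c.start w).1 ∈ c.nbhd w := by
  have h := (start_dart hw).2
  rwa [start_snd] at h

lemma cyc_two {w : α} (n : ℕ) :
    c.cyc w (n + 2) = c.other (c.cyc w n) (c.cyc w (n + 1)) := by
  rw [Ctx.cyc, show n + 2 = (n + 1) + 1 from rfl, W_succ, W_eq_pair]
  rfl

lemma nbhd_cyc {w : α} (hw : w ∈ c.B) (n : ℕ) :
    c.nbhd (c.cyc w (n + 1)) = {c.cyc w n, c.cyc w (n + 2)} := by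
  rw [nbhd_eq_pair (cyc_mem_B hw (n + 1)) (cyc_succ_mem_nbhd hw n), ← cyc_two]

lemma cyc_one {w : α} : c.cyc w 1 = c.other (c.start w).1 w := by
  rw [Ctx.cyc, W_succ, W_zero, Ctx.stepd, start_snd]

lemma nbhd_cyc_zero {w : α} (hw : w ∈ c.B) :
    c.nbhd w = {(c.start w).1, c.cyc w 1} := by
  rw [nbhd_eq_pair hw (start_fst_mem hw), ← cyc_one]

lemma per_ne_one {w : α} (hw : w ∈ c.B) : c.per w ≠ 1 := by
  intro h
  have h1 : c.cyc w 1 = c.cyc w 0 := by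
    rw [cyc_zero, ← h, cyc_per hw]
  exact cyc_succ_ne hw 0 h1

lemma per_ne_two {w : α} (hw : w ∈ c.B) : c.per w ≠ 2 := by
  intro h
  have h1 : c.cyc w 2 = c.cyc w 0 := by
    rw [cyc_zero, ← h, cyc_per hw]
  exact cyc_straight hw 0 h1

lemma per_ge_three {w : α} (hw : w ∈ c.B) : 3 ≤ c.per w := by
  have h0 := per_pos hw
  have h1 := per_ne_one hw
  have h2 := per_ne_two hw
  omega

lemma cyc_inj {w : α} (hw : w ∈ c.B) :
    ∀ i1 i2, i1 < i2 → i2 < c.per w → c.cyc w i1 ≠ c.cyc w i2 := by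
  intro i1 i2 h12 h2per heq
  have hP : ∃ j', ∃ j, j < j' ∧ c.cyc w j = c.cyc w j' := ⟨i2, i1, h12, heq⟩
  obtain ⟨j, hjlt, hjeq⟩ := Nat.find_spec hP
  set js := Nat.find hP with hjs
  have hjs_le : js ≤ i2 := Nat.find_le ⟨i1, h12, heq⟩
  have hmin : ∀ a b, a < b → b < js → c.cyc w a ≠ c.cyc w b := by
    intro a b hab hbjs h
    exact Nat.find_min hP hbjs ⟨a, hab, h⟩
  have hjs1 : 1 ≤ js := by omega
  set i := js - 1 with hi
  have hjs_eq : js = i + 1 := by omega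
  have h_in : c.cyc w i ∈ c.nbhd (c.cyc w js) := by
    rw [hjs_eq]
    exact cyc_succ_mem_nbhd hw i
  rcases Nat.eq_zero_or_pos j with rfl | hj1
  · -- j = 0 case
    rw [← hjeq, cyc_zero, nbhd_cyc_zero hw] at h_in
    rcases Finset.mem_insert.mp h_in with hcase | hcase
    · -- cyc i = start fst : full period found
      have hWeq : c.W w js = c.W w 0 := by
        rw [hjs_eq, W_eq_pair, W_zero]
        refine Prod.ext ?_ ?_
        · exact hcase
        · show c.cyc w (i + 1) = (c.start w).2
          rw [start_snd, ← hjs_eq, ← hjeq, cyc_zero]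
      have := per_min hw (by omega : 0 < js) hWeq
      omega
    · -- cyc i = cyc 1
      rw [Finset.mem_singleton] at hcase
      have hi1 : i ≠ 0 := by
        intro h0
        refine cyc_succ_ne hw 0 ?_
        calc c.cyc w (0 + 1) = c.cyc w js := by congr 1; omega
          _ = c.cyc w 0 := hjeq.symm
      have hi2 : i ≠ 1 := by
        intro h1
        refine cyc_straight hw 0 ?_
        calc c.cyc w (0 + 2) = c.cyc w js := by congr 1; omega
          _ = c.cyc w 0 := hjeq.symm
      have : 1 < i := by omega
      exact hmin 1 i this (by omega) hcase.symm
  · -- j ≥ 1 case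
    obtain ⟨j', rfl⟩ : ∃ j', j = j' + 1 := ⟨j - 1, by omega⟩
    rw [← hjeq, nbhd_cyc hw j'] at h_in
    rcases Finset.mem_insert.mp h_in with hcase | hcase
    · -- cyc i = cyc j'
      have hij : i ≠ j' := by
        intro h
        omega
      rcases Nat.lt_or_ge j' i with hlt | hge
      · exact hmin j' i hlt (by omega) hcase.symm
      · exact hmin i j' (by omega) (by omega) hcase
    · -- cyc i = cyc (j'+2)
      rw [Finset.mem_singleton] at hcase
      have hij : i ≠ j' + 2 := by
        intro h
        refine cyc_straight hw (j' + 1) ?_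
        calc c.cyc w (j' + 1 + 2) = c.cyc w (i + 1) := by congr 1; omega
          _ = c.cyc w js := by rw [← hjs_eq]
          _ = c.cyc w (j' + 1) := hjeq.symm
      rcases Nat.lt_or_ge (j' + 2) i with hlt | hge
      · exact hmin (j' + 2) i hlt (by omega) hcase.symm
      · -- then j' + 2 = js and i = j' + 1, contradicting succ_ne
        have hii : i = j' + 1 := by omega
        refine cyc_succ_ne hw (j' + 1) ?_
        have h2 := hcase
        rw [hii] at h2
        exact h2.symm
/-! ### Edges along the cycle, and oddness -/

noncomputable def E (c : Ctx α) (w : α) (n : ℕ) : Finset α :=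
  if h : ∃ f, f ∈ c.F2 ∧ c.cyc w (n + 1) ∈ f ∧ c.cyc w n ∈ f then h.choose else ∅

lemma E_spec {w : α} (hw : w ∈ c.B) (n : ℕ) :
    c.E w n ∈ c.F2 ∧ c.cyc w n ∈ c.E w n ∧ c.cyc w (n + 1) ∈ c.E w n := by
  have h := cyc_mem_nbhd_succ hw n
  rw [mem_nbhd_iff] at h
  obtain ⟨_, _, f, hf, h1, h2⟩ := h
  have hex : ∃ f, f ∈ c.F2 ∧ c.cyc w (n + 1) ∈ f ∧ c.cyc w n ∈ f := ⟨f, hf, h1, h2⟩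
  rw [Ctx.E, dif_pos hex]
  obtain ⟨ha, hb, hc⟩ := hex.choose_spec
  exact ⟨ha, hc, hb⟩

lemma E_inter {w : α} (hw : w ∈ c.B) (n : ℕ) :
    c.E w n ∩ c.S = {c.cyc w n, c.cyc w (n + 1)} := by
  obtain ⟨hF2, h1, h2⟩ := E_spec hw n
  have hsub : ({c.cyc w n, c.cyc w (n + 1)} : Finset α) ⊆ c.E w n ∩ c.S := by
    intro x hx
    rcases Finset.mem_insert.mp hx with rfl | hx
    · exact Finset.mem_inter.mpr ⟨h1, (mem_B_iff.mp (cyc_mem_B hw n)).1⟩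
    · rw [Finset.mem_singleton] at hx; subst hx
      exact Finset.mem_inter.mpr ⟨h2, (mem_B_iff.mp (cyc_mem_B hw (n + 1))).1⟩
  have hcard : (c.E w n ∩ c.S).card ≤ ({c.cyc w n, c.cyc w (n + 1)} : Finset α).card := by
    rw [card_F2_inter hF2, Finset.card_insert_of_notMem
      (by simpa using (cyc_succ_ne hw n).symm), Finset.card_singleton]
  exact (Finset.eq_of_subset_of_card_le hsub hcard).symm

lemma edge_unique {w : α} (hw : w ∈ c.B) {f : Finset α} (hf : f ∈ c.F2) (n : ℕ)
    (h1 : c.cyc w n ∈ f) (h2 : c.cyc w (n + 1) ∈ f) : f = c.E w n := by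
  by_contra hne
  apply no_parallel hf (E_spec hw n).1 hne
  have hsub : ({c.cyc w n, c.cyc w (n + 1)} : Finset α) ⊆ f ∩ c.S := by
    intro x hx
    rcases Finset.mem_insert.mp hx with rfl | hx
    · exact Finset.mem_inter.mpr ⟨h1, (mem_B_iff.mp (cyc_mem_B hw n)).1⟩
    · rw [Finset.mem_singleton] at hx; subst hx
      exact Finset.mem_inter.mpr ⟨h2, (mem_B_iff.mp (cyc_mem_B hw (n + 1))).1⟩
  have hcard : (f ∩ c.S).card ≤ ({c.cyc w n, c.cyc w (n + 1)} : Finset α).card := by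
    rw [card_F2_inter hf, Finset.card_insert_of_notMem
      (by simpa using (cyc_succ_ne hw n).symm), Finset.card_singleton]
  rw [(Finset.eq_of_subset_of_card_le hsub hcard).symm, E_inter hw n]

lemma edges_at {w : α} (hw : w ∈ c.B) {f : Finset α} (hf : f ∈ c.F2) (n : ℕ)
    (hmem : c.cyc w (n + 1) ∈ f) : f = c.E w n ∨ f = c.E w (n + 1) := by
  have hS1 : c.cyc w (n + 1) ∈ c.S := (mem_B_iff.mp (cyc_mem_B hw (n + 1))).1
  obtain ⟨x, hxne, hpair⟩ := pair_other hf (Finset.mem_inter.mpr ⟨hmem, hS1⟩)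
  have hxf : x ∈ f ∩ c.S := by rw [hpair]; simp
  have hxB : x ∈ c.B := mem_B_of_mem_F2 hf hxf
  have hxN : x ∈ c.nbhd (c.cyc w (n + 1)) := by
    rw [mem_nbhd_iff]
    exact ⟨hxB, hxne, f, hf, Finset.mem_of_mem_inter_left hxf, hmem⟩
  rw [nbhd_cyc hw n] at hxN
  rcases Finset.mem_insert.mp hxN with rfl | hxN
  · exact Or.inl (edge_unique hw hf n (Finset.mem_of_mem_inter_left hxf) hmem)
  · rw [Finset.mem_singleton] at hxN; subst hxN
    exact Or.inr (edge_unique hw hf (n + 1) hmem (Finset.mem_of_mem_inter_left hxf))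

lemma E_ne_succ {w : α} (hw : w ∈ c.B) (n : ℕ) : c.E w n ≠ c.E w (n + 1) := by
  intro h
  have h1 := E_inter hw n
  have h2 := E_inter hw (n + 1)
  rw [h] at h1
  rw [h1] at h2
  have : c.cyc w n ∈ ({c.cyc w (n + 1), c.cyc w (n + 2)} : Finset α) := by
    rw [← h2]; simp
  rcases Finset.mem_insert.mp this with hc | hc
  · exact (cyc_succ_ne hw n).symm hc
  · rw [Finset.mem_singleton] at hc
    exact cyc_straight hw n hc.symm

lemma E_add_per {w : α} (hw : w ∈ c.B) (n : ℕ) : c.E w (n + c.per w) = c.E w n := by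
  obtain ⟨hF2, h1, h2⟩ := E_spec hw (n + c.per w)
  rw [cyc_add_per hw n] at h1
  rw [show n + c.per w + 1 = (n + 1) + c.per w by omega, cyc_add_per hw (n + 1)] at h2
  exact edge_unique hw hF2 n h1 h2

/-- cyclic shift invariance of sums over `range k`. -/
lemma sum_shift {k : ℕ} (hk : 0 < k) (g : ℕ → ℝ) :
    ∑ j ∈ Finset.range k, g ((j + 1) % k) = ∑ j ∈ Finset.range k, g j := by
  apply Finset.sum_nbij' (i := fun j => (j + 1) % k) (j := fun j => (j + (k - 1)) % k)
  · intro a ha; exact Finset.mem_range.mpr (Nat.mod_lt _ hk)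
  · intro a ha; exact Finset.mem_range.mpr (Nat.mod_lt _ hk)
  · intro a ha
    rw [Nat.mod_add_mod, show a + 1 + (k - 1) = a + k by omega, Nat.add_mod_right,
      Nat.mod_eq_of_lt (Finset.mem_range.mp ha)]
  · intro a ha
    rw [Nat.mod_add_mod, show a + (k - 1) + 1 = a + k by omega, Nat.add_mod_right,
      Nat.mod_eq_of_lt (Finset.mem_range.mp ha)]
  · intro a ha; rfl

lemma neg_one_pow_mod {k : ℕ} (hk : Even k) (m : ℕ) : (-1 : ℝ) ^ (m % k) = (-1) ^ m := by
  conv_rhs => rw [← Nat.div_add_mod m k]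
  rw [pow_add, pow_mul, Even.neg_one_pow hk, one_pow, one_mul]

lemma per_odd {w : α} (hw : w ∈ c.B) : Odd (c.per w) := by
  rw [← Nat.not_even_iff_odd]
  intro heven
  set k := c.per w with hk
  have hkpos : 0 < k := per_pos hw
  set v : α → ℝ := fun x => ∑ j ∈ Finset.range k, if c.cyc w j = x then (-1 : ℝ) ^ j else 0
    with hv
  have hvcyc : ∀ i < k, v (c.cyc w i) = (-1) ^ i := by
    intro i hi
    show (∑ j ∈ Finset.range k, if c.cyc w j = c.cyc w i then (-1 : ℝ) ^ j else 0) = (-1) ^ i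
    rw [Finset.sum_eq_single_of_mem i (Finset.mem_range.mpr hi)]
    · rw [if_pos rfl]
    · intro j hj hne
      rw [if_neg]
      intro hEq
      rcases Nat.lt_or_ge j i with hlt | hge
      · exact cyc_inj hw j i hlt hi hEq
      · exact cyc_inj hw i j (by omega) (Finset.mem_range.mp hj) hEq.symm
  have hker : ∀ f ∈ c.F, ∑ x ∈ f ∩ c.S, v x = 0 := by
    intro f hf
    have hswap : ∑ x ∈ f ∩ c.S, v x
        = ∑ j ∈ Finset.range k, (if c.cyc w j ∈ f then (-1 : ℝ) ^ j else 0) := by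
      rw [hv]
      rw [Finset.sum_comm]
      apply Finset.sum_congr rfl
      intro j _
      rw [Finset.sum_ite_eq (f ∩ c.S) (c.cyc w j) (fun _ => (-1 : ℝ) ^ j)]
      congr 1
      simp only [Finset.mem_inter, eq_iff_iff, and_iff_left_iff_imp]
      intro _
      exact (mem_B_iff.mp (cyc_mem_B hw j)).1
    rw [hswap]
    by_cases hf2 : f ∈ c.F2
    · -- reindex and split
      have hstep1 : ∑ j ∈ Finset.range k, (if c.cyc w j ∈ f then (-1 : ℝ) ^ j else 0)
          = ∑ j ∈ Finset.range k, (if c.cyc w (j + 1) ∈ f then (-1 : ℝ) ^ (j + 1) else 0) := by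
        rw [← sum_shift hkpos (fun m => if c.cyc w m ∈ f then (-1 : ℝ) ^ m else 0)]
        apply Finset.sum_congr rfl
        intro j _
        rw [← cyc_mod hw (j + 1), neg_one_pow_mod heven (j + 1)]
      have hsplit : ∀ j : ℕ, (if c.cyc w (j + 1) ∈ f then (-1 : ℝ) ^ (j + 1) else 0)
          = (if f = c.E w j then (-1 : ℝ) ^ (j + 1) else 0)
            + (if f = c.E w (j + 1) then (-1 : ℝ) ^ (j + 1) else 0) := by
        intro j
        by_cases hmem : c.cyc w (j + 1) ∈ f
        · rw [if_pos hmem]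
          rcases edges_at hw hf2 j hmem with hcase | hcase
          · rw [if_pos hcase, if_neg (by rw [hcase]; exact E_ne_succ hw j), add_zero]
          · rw [if_pos hcase, if_neg (by rw [hcase]; exact (E_ne_succ hw j).symm), zero_add]
        · rw [if_neg hmem, if_neg, if_neg]
          · ring
          · intro hcase
            exact hmem (by rw [hcase]; exact (E_spec hw (j + 1)).2.1)
          · intro hcase
            exact hmem (by rw [hcase]; exact (E_spec hw j).2.2)
      have hstep2 : ∑ j ∈ Finset.range k, (if f = c.E w (j + 1) then (-1 : ℝ) ^ (j + 1) else 0)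
          = ∑ j ∈ Finset.range k, (if f = c.E w j then (-1 : ℝ) ^ j else 0) := by
        rw [← sum_shift hkpos (fun m => if f = c.E w m then (-1 : ℝ) ^ m else 0)]
        apply Finset.sum_congr rfl
        intro j hj
        have hjk := Finset.mem_range.mp hj
        have hEmod : c.E w ((j + 1) % k) = c.E w (j + 1) := by
          rcases Nat.lt_or_ge (j + 1) k with hlt | hge
          · rw [Nat.mod_eq_of_lt hlt]
          · have hj1 : j + 1 = k := by omega
            rw [hj1, Nat.mod_self, ← E_add_per hw 0, hk]
            norm_num
        rw [hEmod, neg_one_pow_mod heven (j + 1)]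
      calc ∑ j ∈ Finset.range k, (if c.cyc w j ∈ f then (-1 : ℝ) ^ j else 0)
          = ∑ j ∈ Finset.range k, ((if f = c.E w j then (-1 : ℝ) ^ (j + 1) else 0)
            + (if f = c.E w (j + 1) then (-1 : ℝ) ^ (j + 1) else 0)) := by
            rw [hstep1]; exact Finset.sum_congr rfl (fun j _ => hsplit j)
        _ = ∑ j ∈ Finset.range k, (if f = c.E w j then (-1 : ℝ) ^ (j + 1) else 0)
            + ∑ j ∈ Finset.range k, (if f = c.E w (j + 1) then (-1 : ℝ) ^ (j + 1) else 0) :=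
            Finset.sum_add_distrib
        _ = ∑ j ∈ Finset.range k, (if f = c.E w j then (-1 : ℝ) ^ (j + 1) else 0)
            + ∑ j ∈ Finset.range k, (if f = c.E w j then (-1 : ℝ) ^ j else 0) := by
            rw [hstep2]
        _ = ∑ j ∈ Finset.range k, ((if f = c.E w j then (-1 : ℝ) ^ (j + 1) else 0)
            + (if f = c.E w j then (-1 : ℝ) ^ j else 0)) := Finset.sum_add_distrib.symm
        _ = 0 := by
            apply Finset.sum_eq_zero
            intro j _
            by_cases hc : f = c.E w j
            · rw [if_pos hc, if_pos hc, pow_succ]; ring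
            · rw [if_neg hc, if_neg hc]; ring
    · -- f not in F2 : no cycle vertex lies in f
      apply Finset.sum_eq_zero
      intro j _
      rw [if_neg]
      intro hmem
      obtain ⟨x, hxS, hsolo⟩ := singleton_of_not_F2 hf hf2
      have : c.cyc w j ∈ f ∩ c.S :=
        Finset.mem_inter.mpr ⟨hmem, (mem_B_iff.mp (cyc_mem_B hw j)).1⟩
      rw [hxS, Finset.mem_singleton] at this
      have hB := cyc_mem_B hw j
      rw [this, mem_B_iff] at hB
      exact hB.2 hsolo
  have h0 := kernel v hker (c.cyc w 0) (mem_B_iff.mp (cyc_mem_B hw 0)).1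
  rw [hvcyc 0 hkpos] at h0
  norm_num at h0

/-! ### Cycle classes -/

noncomputable def V (c : Ctx α) (w : α) : Finset α := (Finset.range (c.per w)).image (c.cyc w)

lemma cyc_mem_V {w : α} (hw : w ∈ c.B) (m : ℕ) : c.cyc w m ∈ c.V w := by
  rw [cyc_mod hw m]
  exact Finset.mem_image.mpr ⟨m % c.per w,
    Finset.mem_range.mpr (Nat.mod_lt _ (per_pos hw)), rfl⟩

lemma mem_V_self {w : α} (hw : w ∈ c.B) : w ∈ c.V w := by
  have := cyc_mem_V hw 0
  rwa [cyc_zero] at this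

lemma V_subset_B {w : α} (hw : w ∈ c.B) : c.V w ⊆ c.B := by
  intro x hx
  obtain ⟨j, _, rfl⟩ := Finset.mem_image.mp hx
  exact cyc_mem_B hw j

lemma V_closed {w : α} (hw : w ∈ c.B) : ∀ u ∈ c.V w, c.nbhd u ⊆ c.V w := by
  intro u hu
  obtain ⟨j, hj, rfl⟩ := Finset.mem_image.mp hu
  have hper := per_pos hw
  set n := j + c.per w - 1 with hn
  have hn1 : n + 1 = j + c.per w := by omega
  have hcyc : c.cyc w j = c.cyc w (n + 1) := by rw [hn1, cyc_add_per hw]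
  rw [hcyc, nbhd_cyc hw n]
  intro x hx
  rcases Finset.mem_insert.mp hx with rfl | hx
  · exact cyc_mem_V hw n
  · rw [Finset.mem_singleton] at hx; subst hx
    exact cyc_mem_V hw (n + 2)

lemma walk_closed {w : α} (hw : w ∈ c.B) {T : Finset α}
    (hT : ∀ u ∈ T, c.nbhd u ⊆ T) (h0 : w ∈ T) : ∀ j, c.cyc w j ∈ T := by
  intro j
  induction j with
  | zero => rwa [cyc_zero]
  | succ j ih => exact hT _ ih (cyc_mem_nbhd_succ hw j)

lemma V_subset_closed {w : α} (hw : w ∈ c.B) {T : Finset α}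
    (hT : ∀ u ∈ T, c.nbhd u ⊆ T) (h0 : w ∈ T) : c.V w ⊆ T := by
  intro x hx
  obtain ⟨j, _, rfl⟩ := Finset.mem_image.mp hx
  exact walk_closed hw hT h0 j

lemma mem_V_of_nbhd {u x : α} (hu : u ∈ c.B) (hx : x ∈ c.nbhd u) : u ∈ c.V x := by
  have hxB : x ∈ c.B := nbhd_mem_B hx
  exact V_closed hxB x (mem_V_self hxB) (nbhd_symm hu hx)

lemma w_mem_V_cyc {w : α} (hw : w ∈ c.B) : ∀ j, w ∈ c.V (c.cyc w j) := by
  intro j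
  induction j with
  | zero => rw [cyc_zero]; exact mem_V_self hw
  | succ j ih =>
    have h1 : c.cyc w j ∈ c.V (c.cyc w (j + 1)) :=
      mem_V_of_nbhd (cyc_mem_B hw j) (cyc_mem_nbhd_succ hw j)
    have hsub : c.V (c.cyc w j) ⊆ c.V (c.cyc w (j + 1)) :=
      V_subset_closed (cyc_mem_B hw j) (V_closed (cyc_mem_B hw (j + 1))) h1
    exact hsub ih

lemma V_eq_of_mem {w w' : α} (hw : w ∈ c.B) (hw' : w' ∈ c.V w) : c.V w' = c.V w := by
  have hw'B : w' ∈ c.B := V_subset_B hw hw'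
  apply Finset.Subset.antisymm
  · exact V_subset_closed hw'B (V_closed hw) hw'
  · obtain ⟨j, _, rfl⟩ := Finset.mem_image.mp hw'
    exact V_subset_closed hw (V_closed (cyc_mem_B hw j)) (w_mem_V_cyc hw j)

end Ctx


/-- Let `H` be a 2-regular hypergraph (hyperedge set `F`, vertex set `F.sup id`)
and `S` a transversal such that the induced subscenario `H_S` (hyperedges
`f ∩ S`) admits a unique probabilistic model `q`, which is strictly positive on
`S`. Then:
(1) the hyperedges of `H_S` of size ≥ 2 form a disjoint union of odd
`k`-hypercycles (`k ≥ 3`, odd), given by cyclic sequences `cyc i` of period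
`k i` of vertices of `S`;
(2) `q` assigns 1 to each vertex lying in a singleton hyperedge of `H_S` and
1/2 to every other vertex of `S`;
(3) consequently, every extremal probabilistic model on `H` takes values only
in `{0, 1/2, 1}` on the vertices of `H`. -/
theorem stmt13 {α : Type*} [DecidableEq α] (F : Finset (Finset α))
    (hreg : ∀ w ∈ F.sup id, degH F w = 2)
    (S : Finset α) (hS : S ⊆ F.sup id)
    (htrans : ∀ f ∈ F, (f ∩ S).Nonempty)
    (q : α → ℝ) (hpos : ∀ w ∈ S, 0 < q w)
    (hmodel : ∀ f ∈ F, ∑ w ∈ f ∩ S, q w = 1)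
    (huniq : ∀ q' : α → ℝ, (∀ w ∈ S, 0 ≤ q' w) →
      (∀ f ∈ F, ∑ w ∈ f ∩ S, q' w = 1) → ∀ w ∈ S, q' w = q w) :
    (∃ (t : ℕ) (k : Fin t → ℕ) (cyc : Fin t → ℕ → α),
      (∀ i, Odd (k i) ∧ 3 ≤ k i) ∧
      (∀ i j, cyc i (j + k i) = cyc i j) ∧
      (∀ i, Set.InjOn (cyc i) ↑(Finset.range (k i))) ∧
      (∀ i i' j j', j < k i → j' < k i' → cyc i j = cyc i' j' → i = i') ∧
      (∀ i j, cyc i j ∈ S) ∧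
      (F.image (fun f => f ∩ S)).filter (fun g => 2 ≤ g.card)
        = Finset.univ.biUnion (fun i =>
            (Finset.range (k i)).image (fun j => ({cyc i j, cyc i (j + 1)} : Finset α)))) ∧
    (∀ w ∈ S, ((∃ f ∈ F, f ∩ S = {w}) → q w = 1) ∧
      (¬ (∃ f ∈ F, f ∩ S = {w}) → q w = 1 / 2)) ∧
    (∀ p : α → ℝ, (∀ w, 0 ≤ p w) → (∀ f ∈ F, ∑ w ∈ f, p w = 1) →
      (∀ p₁ p₂ : α → ℝ, (∀ w, 0 ≤ p₁ w) → (∀ f ∈ F, ∑ w ∈ f, p₁ w = 1) →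
        (∀ w, 0 ≤ p₂ w) → (∀ f ∈ F, ∑ w ∈ f, p₂ w = 1) →
        (∀ w ∈ F.sup id, p w = (p₁ w + p₂ w) / 2) →
        ∀ w ∈ F.sup id, p₁ w = p₂ w) →
      ∀ w ∈ F.sup id, p w = 0 ∨ p w = 1 / 2 ∨ p w = 1) := by
  classical
  set c : Ctx α := ⟨F, S, q, hreg, hS, htrans, hpos, hmodel, huniq⟩ with hcdef
  refine ⟨?_, ?_, ?_⟩
  · -- part (1)
    set C : Finset (Finset α) := c.B.image c.V with hC
    have hex : ∀ i : Fin C.card, ∃ w, w ∈ c.B ∧ c.V w = (C.equivFin.symm i : Finset α) := by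
      intro i
      exact Finset.mem_image.mp ((C.equivFin.symm i).2)
    choose rep hrepB hrepV using hex
    refine ⟨C.card, fun i => c.per (rep i), fun i => c.cyc (rep i), ?_, ?_, ?_, ?_, ?_, ?_⟩
    · exact fun i => ⟨Ctx.per_odd (hrepB i), Ctx.per_ge_three (hrepB i)⟩
    · exact fun i j => Ctx.cyc_add_per (hrepB i) j
    · intro i a ha b hb hab
      have ha' : a < c.per (rep i) := by simpa using ha
      have hb' : b < c.per (rep i) := by simpa using hb
      rcases lt_trichotomy a b with h | h | h
      · exact absurd hab (Ctx.cyc_inj (hrepB i) a b h hb')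
      · exact h
      · exact absurd hab.symm (Ctx.cyc_inj (hrepB i) b a h ha')
    · intro i i' j j' hj hj' heq
      have h1 : c.cyc (rep i) j ∈ c.V (rep i) := Ctx.cyc_mem_V (hrepB i) j
      have heq' : c.cyc (rep i) j = c.cyc (rep i') j' := heq
      have h2 : c.cyc (rep i) j ∈ c.V (rep i') := heq' ▸ Ctx.cyc_mem_V (hrepB i') j'
      have e1 : c.V (c.cyc (rep i) j) = c.V (rep i) := Ctx.V_eq_of_mem (hrepB i) h1
      have e2 : c.V (c.cyc (rep i) j) = c.V (rep i') := Ctx.V_eq_of_mem (hrepB i') h2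
      have hVV : (C.equivFin.symm i : Finset α) = (C.equivFin.symm i' : Finset α) := by
        rw [← hrepV i, ← hrepV i', ← e1, ← e2]
      exact C.equivFin.symm.injective (Subtype.ext hVV)
    · intro i j
      exact (Ctx.mem_B_iff.mp (Ctx.cyc_mem_B (hrepB i) j)).1
    · ext g
      simp only [Finset.mem_filter, Finset.mem_image, Finset.mem_biUnion, Finset.mem_univ,
        true_and, Finset.mem_range]
      constructor
      · rintro ⟨⟨f, hfF, rfl⟩, hcard⟩
        have hfF2 : f ∈ c.F2 := Ctx.mem_F2_iff.mpr ⟨hfF, (by omega : (f ∩ S).card ≠ 1)⟩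
        obtain ⟨a, b, hab, hpair⟩ := Ctx.pair_of_F2 hfF2
        have haB : a ∈ c.B := Ctx.mem_B_of_mem_F2 hfF2 (by rw [hpair]; simp)
        have hbB : b ∈ c.B := Ctx.mem_B_of_mem_F2 hfF2 (by rw [hpair]; simp)
        have haf : a ∈ f := Finset.mem_of_mem_inter_left (by rw [hpair]; simp : a ∈ f ∩ c.S)
        have hbf : b ∈ f := Finset.mem_of_mem_inter_left (by rw [hpair]; simp : b ∈ f ∩ c.S)
        have hbN : b ∈ c.nbhd a := by
          rw [Ctx.mem_nbhd_iff]
          exact ⟨hbB, hab.symm, f, hfF2, hbf, haf⟩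
        have hVa : c.V a ∈ C := by rw [hC]; exact Finset.mem_image_of_mem _ haB
        set i := C.equivFin ⟨c.V a, hVa⟩ with hi
        have hVrep : c.V (rep i) = c.V a := by rw [hrepV i, hi, Equiv.symm_apply_apply]
        have haV : a ∈ c.V (rep i) := by rw [hVrep]; exact Ctx.mem_V_self haB
        obtain ⟨j, hj, hcycj⟩ := Finset.mem_image.mp haV
        rw [Finset.mem_range] at hj
        set wR := rep i with hwRdef
        have hwR : wR ∈ c.B := hrepB i
        have hbN' : b ∈ c.nbhd (c.cyc wR j) := by rw [hcycj]; exact hbN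
        have hper := Ctx.per_pos hwR
        have hn1 : j + c.per wR = (j + c.per wR - 1) + 1 := by omega
        have hcyc' : c.cyc wR j = c.cyc wR ((j + c.per wR - 1) + 1) := by
          rw [← hn1, Ctx.cyc_add_per hwR]
        rw [hcyc', Ctx.nbhd_cyc hwR] at hbN'
        refine ⟨i, ?_⟩
        rcases Finset.mem_insert.mp hbN' with hb1 | hb1
        · set j0 := (j + c.per wR - 1) % c.per wR with hj0
          refine ⟨j0, Nat.mod_lt _ hper, ?_⟩
          have hcj0 : c.cyc wR j0 = b := by
            rw [hj0, ← Ctx.cyc_mod hwR, ← hb1]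
          have hcj0' : c.cyc wR (j0 + 1) = a := by
            rw [Ctx.cyc_mod hwR (j0 + 1), hj0, Nat.mod_add_mod,
              show (j + c.per wR - 1) + 1 = j + c.per wR by omega,
              Nat.add_mod_right, Nat.mod_eq_of_lt hj, hcycj]
          rw [hcj0, hcj0', hpair, Finset.pair_comm]
        · rw [Finset.mem_singleton] at hb1
          refine ⟨j, hj, ?_⟩
          have hcj1 : c.cyc wR (j + 1) = b := by
            rw [hb1]
            have : (j + c.per wR - 1) + 2 = (j + 1) + c.per wR := by omega
            rw [this, Ctx.cyc_add_per hwR]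
          rw [hcycj, hcj1, hpair]
      · rintro ⟨i, j, hj, rfl⟩
        have hwR := hrepB i
        obtain ⟨hEF2, hE1, hE2⟩ := Ctx.E_spec hwR j
        have hEinter := Ctx.E_inter hwR j
        constructor
        · exact ⟨c.E (rep i) j, (Ctx.mem_F2_iff.mp hEF2).1, hEinter⟩
        · rw [Finset.card_insert_of_notMem
            (by simpa using (Ctx.cyc_succ_ne hwR j).symm), Finset.card_singleton]
  · -- part (2)
    intro w hw
    exact Ctx.values (c := ⟨F, S, q, hreg, hS, htrans, hpos, hmodel, huniq⟩) w hw
  · -- part (3)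
    intro p hp hpm hext w hw
    set S' : Finset α := (F.sup id).filter (fun w => 0 < p w) with hS'
    have hS'sub : S' ⊆ F.sup id := Finset.filter_subset _ _
    have hfsub : ∀ f ∈ F, f ⊆ F.sup id := by
      intro f hf x hx
      exact Finset.mem_sup.mpr ⟨f, hf, hx⟩
    have hinterS' : ∀ f ∈ F, f ∩ S' = f.filter (fun w => 0 < p w) := by
      intro f hf
      ext x
      simp only [Finset.mem_inter, Finset.mem_filter, hS']
      constructor
      · rintro ⟨h1, _, h3⟩; exact ⟨h1, h3⟩
      · rintro ⟨h1, h2⟩; exact ⟨h1, hfsub f hf h1, h2⟩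
    have hmodel' : ∀ f ∈ F, ∑ w ∈ f ∩ S', p w = 1 := by
      intro f hf
      rw [hinterS' f hf]
      rw [← hpm f hf]
      rw [← Finset.sum_filter_add_sum_filter_not f (fun w => 0 < p w) p]
      have : ∑ w ∈ f.filter (fun w => ¬ 0 < p w), p w = 0 := by
        apply Finset.sum_eq_zero
        intro x hx
        have := (Finset.mem_filter.mp hx).2
        have := hp x
        linarith
      rw [this, add_zero]
    have htrans' : ∀ f ∈ F, (f ∩ S').Nonempty := by
      intro f hf
      by_contra hne
      rw [Finset.not_nonempty_iff_eq_empty] at hne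
      have := hmodel' f hf
      rw [hne, Finset.sum_empty] at this
      norm_num at this
    have hpos' : ∀ w ∈ S', 0 < p w := fun w hw => (Finset.mem_filter.mp hw).2
    have huniq' : ∀ q' : α → ℝ, (∀ w ∈ S', 0 ≤ q' w) →
        (∀ f ∈ F, ∑ w ∈ f ∩ S', q' w = 1) → ∀ w ∈ S', q' w = p w := by
      intro q' hq'nn hq'm
      rcases S'.eq_empty_or_nonempty with hemp | hne
      · intro w hw; rw [hemp] at hw; exact absurd hw (Finset.notMem_empty w)
      set r : α → ℝ := fun w => if w ∈ S' then q' w else 0 with hr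
      have hrnn : ∀ w, 0 ≤ r w := by
        intro w
        show (0:ℝ) ≤ if w ∈ S' then q' w else 0
        by_cases h : w ∈ S'
        · rw [if_pos h]; exact hq'nn w h
        · rw [if_neg h]
      have hrm : ∀ f ∈ F, ∑ w ∈ f, r w = 1 := by
        intro f hf
        have h1 : ∑ w ∈ f, r w = ∑ w ∈ f, (if w ∈ S' then q' w else 0) := rfl
        rw [h1, Finset.sum_ite_mem, hq'm f hf]
      set m := S'.inf' hne p with hm
      have hmpos : 0 < m := by
        obtain ⟨x, hx, hxe⟩ := Finset.exists_mem_eq_inf' hne p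
        rw [hm, hxe]; exact hpos' x hx
      set M := S'.sup' hne (fun w => |p w - r w|) with hM
      have hMnn : 0 ≤ M := by
        obtain ⟨x, hx⟩ := hne
        have := Finset.le_sup' (fun w => |p w - r w|) hx
        have := abs_nonneg (p x - r x)
        linarith
      set t := m / (M + m + 1) with ht
      have htpos : 0 < t := div_pos hmpos (by linarith)
      have htlt : t < 1 := by
        rw [ht, div_lt_one (by linarith)]
        linarith
      have htM : t * M ≤ m := by
        rw [ht, div_mul_eq_mul_div, div_le_iff₀ (by linarith : (0:ℝ) < M + m + 1)]
        nlinarith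
      set p₁ : α → ℝ := fun w => p w - t * (p w - r w) with hp₁
      set p₂ : α → ℝ := fun w => p w + t * (p w - r w) with hp₂
      have hsum₁ : ∀ f ∈ F, ∑ w ∈ f, p₁ w = 1 := by
        intro f hf
        have h1 : ∑ w ∈ f, p₁ w = ∑ w ∈ f, (p w - t * (p w - r w)) := rfl
        rw [h1, Finset.sum_sub_distrib, ← Finset.mul_sum, Finset.sum_sub_distrib,
          hpm f hf, hrm f hf]
        ring
      have hsum₂ : ∀ f ∈ F, ∑ w ∈ f, p₂ w = 1 := by
        intro f hf
        have h1 : ∑ w ∈ f, p₂ w = ∑ w ∈ f, (p w + t * (p w - r w)) := rfl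
        rw [h1, Finset.sum_add_distrib, ← Finset.mul_sum, Finset.sum_sub_distrib,
          hpm f hf, hrm f hf]
        ring
      have key := hext p₁ p₂
        (by
          intro x
          show (0:ℝ) ≤ p x - t * (p x - r x)
          have h1 := hp x
          have h2 := hrnn x
          nlinarith)
        hsum₁
        (by
          intro x
          show (0:ℝ) ≤ p x + t * (p x - r x)
          by_cases hx : x ∈ S'
          · have h1 : m ≤ p x := Finset.inf'_le p hx
            have h2 : |p x - r x| ≤ M := Finset.le_sup' (fun w => |p w - r w|) hx
            have h3 : t * (p x - r x) ≥ -(t * M) := by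
              nlinarith [neg_abs_le (p x - r x)]
            linarith
          · have hr0 : r x = 0 := by
              show (if x ∈ S' then q' x else 0) = 0
              rw [if_neg hx]
            rw [hr0]
            have := hp x
            nlinarith)
        hsum₂
        (by
          intro x _
          show p x = ((p x - t * (p x - r x)) + (p x + t * (p x - r x))) / 2
          ring)
      intro x hx
      have hxsup : x ∈ F.sup id := hS'sub hx
      have hkey := key x hxsup
      have hkey' : p x - t * (p x - r x) = p x + t * (p x - r x) := hkey
      have hpr : p x = r x := by nlinarith
      have hrx : r x = q' x := by
        show (if x ∈ S' then q' x else 0) = q' x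
        rw [if_pos hx]
      rw [hpr, hrx]
    set c' : Ctx α := ⟨F, S', p, hreg, hS'sub, htrans', hpos', hmodel', huniq'⟩ with hc'
    by_cases hwS' : w ∈ S'
    · have hval := Ctx.values (c := c') w hwS'
      by_cases hsolo : c'.Solo w
      · right; right; exact hval.1 hsolo
      · right; left; exact hval.2 hsolo
    · left
      have h1 : ¬ 0 < p w := by
        intro h
        exact hwS' (Finset.mem_filter.mpr ⟨hw, h⟩)
      have := hp w
      linarith
end
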